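/- Define q : [1,∞) → ℝ by q(i) = i·∫₀^1 [1 − √z·r_t²·arctan(1/(√z·r_t²))]^{i−1}·2r_t dr_t for a fixed z > 0. Then q is Lipschitz continuous on [1,∞). -/
import Mathlib

open MeasureTheory Set

set_option maxHeartbeats 1000000

private lemma aux_sub_arctan_mono : StrictMonoOn (fun t : ℝ => t - Real.arctan t) (Set.Ici 0) := by
  apply strictMonoOn_of_deriv_pos (convex_Ici 0)
  · exact (continuous_id.sub Real.continuous_arctan).continuousOn
  · intro x hx
    rw [interior_Ici] at hx
    have h : HasDerivAt (fun t : ℝ => t - Real.arctan t) (1 - 1 / (1 + x ^ 2)) x :=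
      (hasDerivAt_id x).sub (Real.hasDerivAt_arctan x)
    rw [h.deriv]
    have hx2 : (0:ℝ) < 1 + x ^ 2 := by positivity
    rw [sub_pos, div_lt_one hx2]
    nlinarith [mem_Ioi.mp hx]

private lemma aux_gbounds (z : ℝ) (hz : 0 < z) :
    ∃ δ : ℝ, 0 < δ ∧ δ ≤ 1 / 2 ∧ ∀ r ∈ Set.Icc (0:ℝ) 1,
      δ ≤ 1 - Real.sqrt z * r ^ 2 * Real.arctan (1 / (Real.sqrt z * r ^ 2)) ∧
      1 - Real.sqrt z * r ^ 2 * Real.arctan (1 / (Real.sqrt z * r ^ 2)) ≤ 1 := by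
  have hs : 0 < Real.sqrt z := Real.sqrt_pos.2 hz
  set s := Real.sqrt z with hsdef
  set t₀ : ℝ := 1 / s with ht₀
  have ht₀pos : 0 < t₀ := by positivity
  set m : ℝ := t₀ - Real.arctan t₀ with hm
  have hmpos : 0 < m := by
    have h := aux_sub_arctan_mono (self_mem_Ici (a := (0:ℝ))) (mem_Ici.2 ht₀pos.le) ht₀pos
    simp only [Real.arctan_zero, sub_zero] at h
    exact h
  have hπ : 0 < Real.pi := Real.pi_pos
  refine ⟨min (1/2) (m / Real.pi), by positivity, min_le_left _ _, ?_⟩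
  intro r hr
  obtain ⟨hr0, hr1⟩ := hr
  rcases eq_or_lt_of_le hr0 with h | h
  · subst h
    have hzero : s * (0:ℝ) ^ 2 * Real.arctan (1 / (s * (0:ℝ) ^ 2)) = 0 := by
      norm_num
    rw [hzero]
    constructor
    · exact le_trans (min_le_left _ _) (by norm_num)
    · norm_num
  · -- r > 0
    set u : ℝ := s * r ^ 2 with hu
    have hupos : 0 < u := by positivity
    have hr2 : r ^ 2 ≤ 1 := by nlinarith
    have hus : u ≤ s := by
      have := mul_le_mul_of_nonneg_left hr2 hs.le
      simp only [hu]; linarith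
    have harctan_nonneg : 0 ≤ Real.arctan (1 / u) := by
      rw [← Real.arctan_zero]
      exact Real.arctan_strictMono.monotone (by positivity)
    have harctan_le : Real.arctan (1 / u) ≤ Real.pi / 2 := (Real.arctan_lt_pi_div_two _).le
    constructor
    · rcases le_total u (1 / Real.pi) with hcase | hcase
      · -- small u : u * arctan(1/u) ≤ u * π/2 ≤ 1/2
        have h1 : u * Real.arctan (1 / u) ≤ u * (Real.pi / 2) :=
          mul_le_mul_of_nonneg_left harctan_le hupos.le
        have h2 : u * (Real.pi / 2) ≤ (1 / Real.pi) * (Real.pi / 2) :=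
          mul_le_mul_of_nonneg_right hcase (by positivity)
        have h3 : (1 / Real.pi) * (Real.pi / 2) = 1 / 2 := by
          field_simp
        have := min_le_left (1/2) (m / Real.pi)
        linarith
      · -- large u : use t - arctan t ≥ m for t = 1/u ≥ t₀
        have ht : t₀ ≤ 1 / u := by
          rw [ht₀]
          exact one_div_le_one_div_of_le hupos hus
        have hkey : m ≤ 1 / u - Real.arctan (1 / u) :=
          aux_sub_arctan_mono.monotoneOn (mem_Ici.2 ht₀pos.le)
            (mem_Ici.2 (by positivity : (0:ℝ) ≤ 1 / u)) ht
        have h1 : u * Real.arctan (1 / u) ≤ u * (1 / u - m) :=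
          mul_le_mul_of_nonneg_left (by linarith) hupos.le
        have h2 : u * (1 / u - m) = 1 - u * m := by
          field_simp
        have hu_pi : 1 ≤ u * Real.pi := (div_le_iff₀ hπ).mp hcase
        have h3 : m / Real.pi ≤ u * m := by
          rw [div_le_iff₀ hπ]
          nlinarith [mul_le_mul_of_nonneg_right hu_pi hmpos.le]
        have := min_le_right (1/2) (m / Real.pi)
        linarith
    · nlinarith [mul_nonneg hupos.le harctan_nonneg]

theorem stmt_4 (z : ℝ) (hz : 0 < z) (q : ℝ → ℝ)
    (hq : ∀ i : ℝ, q i =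
      i * ∫ rt in (0:ℝ)..1,
        (1 - Real.sqrt z * rt ^ 2 * Real.arctan (1 / (Real.sqrt z * rt ^ 2))) ^ (i - 1)
          * (2 * rt)) :
    ∃ C > (0:ℝ), ∀ x y : ℝ, 1 ≤ x → 1 ≤ y → |q x - q y| ≤ C * |x - y| := by
  obtain ⟨δ, hδ0, hδhalf, hδg⟩ := aux_gbounds z hz
  set G : ℝ → ℝ := fun r => 1 - Real.sqrt z * r ^ 2 * Real.arctan (1 / (Real.sqrt z * r ^ 2))
    with hGdef
  have hGm : Measurable G := by
    apply Measurable.sub measurable_const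
    apply Measurable.mul
    · exact (measurable_const.mul (measurable_id.pow_const 2))
    · exact Real.measurable_arctan.comp
        (measurable_const.div (measurable_const.mul (measurable_id.pow_const 2)))
  set F : ℝ → ℝ := fun i => ∫ r in (0:ℝ)..1, G r ^ (i - 1) * (2 * r) with hFdef
  have hqF : ∀ i : ℝ, q i = i * F i := hq
  set S : ℝ := -Real.log δ with hSdef
  have hS0 : 0 < S := by
    have : Real.log δ < 0 := Real.log_neg hδ0 (by linarith)
    simp only [hSdef]; linarith
  -- generic integrability
  have integ : ∀ (f : ℝ → ℝ) (M : ℝ), Measurable f → (∀ r ∈ Icc (0:ℝ) 1, |f r| ≤ M) →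
      IntervalIntegrable f volume 0 1 := by
    intro f M hm hb
    rw [intervalIntegrable_iff_integrableOn_Ioc_of_le zero_le_one]
    apply Integrable.mono' (integrable_const M) hm.aestronglyMeasurable
    filter_upwards [ae_restrict_mem measurableSet_Ioc] with r hr
    exact hb r (Ioc_subset_Icc_self hr)
  have h2r_int : IntervalIntegrable (fun r : ℝ => 2 * r) volume 0 1 :=
    (continuous_const.mul continuous_id).intervalIntegrable 0 1
  have h2r_val : (∫ r in (0:ℝ)..1, 2 * r) = 1 := by
    rw [intervalIntegral.integral_const_mul, integral_id]; norm_num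
  -- pointwise facts
  have hGpos : ∀ r ∈ Icc (0:ℝ) 1, 0 < G r := fun r hr => lt_of_lt_of_le hδ0 (hδg r hr).1
  have hGle1 : ∀ r ∈ Icc (0:ℝ) 1, G r ≤ 1 := fun r hr => (hδg r hr).2
  have hlogG : ∀ r ∈ Icc (0:ℝ) 1, 0 ≤ -Real.log (G r) ∧ -Real.log (G r) ≤ S := by
    intro r hr
    constructor
    · have := Real.log_nonpos (hGpos r hr).le (hGle1 r hr); linarith
    · have := Real.log_le_log hδ0 (hδg r hr).1
      simp only [hSdef]; linarith
  have hrpow_int : ∀ i : ℝ, 1 ≤ i →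
      IntervalIntegrable (fun r => G r ^ (i-1) * (2*r)) volume 0 1 := by
    intro i hi
    have hmeas : Measurable fun r => G r ^ (i-1) * (2*r) :=
      ((Real.continuous_rpow_const (by linarith : (0:ℝ) ≤ i - 1)).measurable.comp hGm).mul
        (measurable_const.mul measurable_id)
    apply integ _ 2 hmeas
    intro r hr
    rw [abs_mul]
    have h1 : |G r ^ (i-1)| ≤ 1 := by
      rw [abs_of_nonneg (Real.rpow_nonneg (hGpos r hr).le _)]
      exact Real.rpow_le_one (hGpos r hr).le (hGle1 r hr) (by linarith)
    have h2 : |2 * r| ≤ 2 := by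
      rw [abs_of_nonneg (by nlinarith [hr.1] : (0:ℝ) ≤ 2 * r)]
      nlinarith [hr.2]
    calc |G r ^ (i-1)| * |2*r| ≤ 1 * 2 :=
          mul_le_mul h1 h2 (abs_nonneg _) zero_le_one
      _ = 2 := by norm_num
  have hB_int : ∀ i : ℝ, 1 ≤ i →
      IntervalIntegrable (fun r => G r ^ (i-1) * (-Real.log (G r)) * (2*r)) volume 0 1 := by
    intro i hi
    have hmeas : Measurable fun r => G r ^ (i-1) * (-Real.log (G r)) * (2*r) :=
      (((Real.continuous_rpow_const (by linarith : (0:ℝ) ≤ i - 1)).measurable.comp hGm).mul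
        (Real.measurable_log.comp hGm).neg).mul (measurable_const.mul measurable_id)
    apply integ _ (2 * S) hmeas
    intro r hr
    rw [abs_mul, abs_mul]
    have h1 : |G r ^ (i-1)| ≤ 1 := by
      rw [abs_of_nonneg (Real.rpow_nonneg (hGpos r hr).le _)]
      exact Real.rpow_le_one (hGpos r hr).le (hGle1 r hr) (by linarith)
    have h3 := hlogG r hr
    have h2 : |(-Real.log (G r))| ≤ S := by rw [abs_of_nonneg h3.1]; exact h3.2
    have h4 : |2 * r| ≤ 2 := by
      rw [abs_of_nonneg (by nlinarith [hr.1] : (0:ℝ) ≤ 2 * r)]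
      nlinarith [hr.2]
    calc |G r ^ (i-1)| * |(-Real.log (G r))| * |2*r| ≤ (1 * S) * 2 := by
          apply mul_le_mul _ h4 (abs_nonneg _) (by nlinarith)
          exact mul_le_mul h1 h2 (abs_nonneg _) zero_le_one
      _ = 2 * S := by ring
  -- F bounds
  have hF01 : ∀ i : ℝ, 1 ≤ i → 0 ≤ F i ∧ F i ≤ 1 := by
    intro i hi
    constructor
    · apply intervalIntegral.integral_nonneg zero_le_one
      intro r hr
      have hg := hGpos r hr
      have hrr := hr.1
      positivity
    · calc F i ≤ ∫ r in (0:ℝ)..1, 2 * r := by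
            apply intervalIntegral.integral_mono_on zero_le_one (hrpow_int i hi) h2r_int
            intro r hr
            have h1 : G r ^ (i-1) ≤ 1 :=
              Real.rpow_le_one (hGpos r hr).le (hGle1 r hr) (by linarith)
            nlinarith [hr.1, Real.rpow_nonneg (hGpos r hr).le (i-1)]
        _ = 1 := h2r_val
  -- key estimate for 1 ≤ y ≤ x
  have key : ∀ x y : ℝ, 1 ≤ y → y ≤ x → |q x - q y| ≤ (3 + 2 * S) * (x - y) := by
    intro x y hy hyx
    have hx : 1 ≤ x := le_trans hy hyx
    set B : ℝ := ∫ r in (0:ℝ)..1, G r ^ (y-1) * (-Real.log (G r)) * (2*r) with hBdef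
    have hFmono : F x ≤ F y := by
      apply intervalIntegral.integral_mono_on zero_le_one (hrpow_int x hx) (hrpow_int y hy)
      intro r hr
      have := Real.rpow_le_rpow_of_exponent_ge (hGpos r hr) (hGle1 r hr)
        (by linarith : y - 1 ≤ x - 1)
      nlinarith [hr.1]
    have hFdiff : F y - F x ≤ (x - y) * B := by
      simp only [hFdef, hBdef]
      rw [← intervalIntegral.integral_sub (hrpow_int y hy) (hrpow_int x hx),
        ← intervalIntegral.integral_const_mul]
      apply intervalIntegral.integral_mono_on zero_le_one
        ((hrpow_int y hy).sub (hrpow_int x hx))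
        ((hB_int y hy).const_mul (x - y))
      intro r hr
      have h0 := hGpos r hr
      have h2r : (0:ℝ) ≤ 2 * r := by nlinarith [hr.1]
      have hsplit : G r ^ (x-1) = G r ^ (y-1) * G r ^ (x-y) := by
        rw [show x - 1 = (y-1) + (x-y) by ring, Real.rpow_add h0]
      have hkey : 1 - G r ^ (x-y) ≤ (x-y) * (-Real.log (G r)) := by
        rw [Real.rpow_def_of_pos h0]
        nlinarith [Real.add_one_le_exp (Real.log (G r) * (x - y))]
      have hnn : (0:ℝ) ≤ G r ^ (y-1) := Real.rpow_nonneg h0.le _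
      have h1 : G r ^ (y-1) * (1 - G r ^ (x-y)) ≤ G r ^ (y-1) * ((x-y) * (-Real.log (G r))) :=
        mul_le_mul_of_nonneg_left hkey hnn
      have h2 : G r ^ (y-1) * (1 - G r ^ (x-y)) * (2*r) ≤
          G r ^ (y-1) * ((x-y) * (-Real.log (G r))) * (2*r) :=
        mul_le_mul_of_nonneg_right h1 h2r
      rw [hsplit]
      ring_nf
      ring_nf at h2
      linarith
    have hB0 : 0 ≤ B := by
      apply intervalIntegral.integral_nonneg zero_le_one
      intro r hr
      have h0 := hGpos r hr
      have h2r : (0:ℝ) ≤ 2 * r := by nlinarith [hr.1]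
      have hl := (hlogG r hr).1
      have hnn : (0:ℝ) ≤ G r ^ (y-1) := Real.rpow_nonneg h0.le _
      positivity
    have hyB : y * B ≤ 2 * S + 2 := by
      rcases le_total y 2 with hy2 | hy2
      · have hBS : B ≤ S := by
          calc B ≤ ∫ r in (0:ℝ)..1, S * (2*r) := by
                apply intervalIntegral.integral_mono_on zero_le_one (hB_int y hy)
                  (h2r_int.const_mul S)
                intro r hr
                have h0 := hGpos r hr
                have h2r : (0:ℝ) ≤ 2 * r := by nlinarith [hr.1]
                have h1 : G r ^ (y-1) ≤ 1 :=
                  Real.rpow_le_one h0.le (hGle1 r hr) (by linarith)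
                have hl := hlogG r hr
                have hnn : (0:ℝ) ≤ G r ^ (y-1) := Real.rpow_nonneg h0.le _
                have hcore : G r ^ (y-1) * (-Real.log (G r)) ≤ S :=
                  le_trans (mul_le_mul h1 hl.2 hl.1 zero_le_one) (by norm_num)
                exact mul_le_mul_of_nonneg_right hcore h2r
            _ = S := by rw [intervalIntegral.integral_const_mul, h2r_val, mul_one]
        have hh : 0 ≤ (2 - y) * B := mul_nonneg (by linarith) hB0
        nlinarith
      · have hbpos : (0:ℝ) < y - 1 := by linarith
        have hB1 : B ≤ 1 / (y-1) := by
          calc B ≤ ∫ r in (0:ℝ)..1, (1/(y-1)) * (2*r) := by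
                apply intervalIntegral.integral_mono_on zero_le_one (hB_int y hy)
                  (h2r_int.const_mul _)
                intro r hr
                have h0 := hGpos r hr
                have h2r : (0:ℝ) ≤ 2 * r := by nlinarith [hr.1]
                have hcore : G r ^ (y-1) * (-Real.log (G r)) ≤ 1 / (y-1) := by
                  rw [Real.rpow_def_of_pos h0, le_div_iff₀ hbpos]
                  have h1 := Real.add_one_le_exp (-(Real.log (G r) * (y-1)))
                  have h2 : Real.exp (Real.log (G r) * (y-1)) *
                      Real.exp (-(Real.log (G r) * (y-1))) = 1 := by
                    rw [← Real.exp_add, add_neg_cancel, Real.exp_zero]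
                  have h3 : (0:ℝ) < Real.exp (Real.log (G r) * (y-1)) := Real.exp_pos _
                  nlinarith [mul_le_mul_of_nonneg_left h1 h3.le]
                exact mul_le_mul_of_nonneg_right hcore h2r
            _ = 1 / (y-1) := by rw [intervalIntegral.integral_const_mul, h2r_val, mul_one]
        have hy1 : y * B ≤ y * (1/(y-1)) := mul_le_mul_of_nonneg_left hB1 (by linarith)
        have hy2' : y * (1/(y-1)) ≤ 2 := by
          rw [mul_one_div, div_le_iff₀ hbpos]; linarith
        linarith
    -- combine
    rw [hqF x, hqF y]
    have hFx := hF01 x hx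
    have hFy := hF01 y hy
    have hsplit : x * F x - y * F y = (x - y) * F x - y * (F y - F x) := by ring
    rw [hsplit]
    have h1 : (0:ℝ) ≤ (x - y) * F x := mul_nonneg (by linarith) hFx.1
    have h2 : (0:ℝ) ≤ y * (F y - F x) := mul_nonneg (by linarith) (by linarith)
    have habs : |(x - y) * F x - y * (F y - F x)| ≤ (x-y) * F x + y * (F y - F x) := by
      rw [abs_le]
      constructor <;> linarith
    have h3 : (x-y) * F x ≤ (x - y) * 1 := mul_le_mul_of_nonneg_left hFx.2 (by linarith)
    have h4 : y * (F y - F x) ≤ y * ((x-y) * B) :=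
      mul_le_mul_of_nonneg_left hFdiff (by linarith)
    have h6 : (y * B) * (x - y) ≤ (2*S+2) * (x-y) :=
      mul_le_mul_of_nonneg_right hyB (by linarith)
    nlinarith
  refine ⟨3 + 2 * S, by linarith, ?_⟩
  intro x y hx hy
  rcases le_total y x with h | h
  · rw [abs_of_nonneg (by linarith : (0:ℝ) ≤ x - y)]
    exact key x y hy h
  · rw [abs_sub_comm, abs_of_nonpos (by linarith : x - y ≤ 0)]
    have := key y x hx h
    linarith
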